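/- arXiv:1501.01975 — 7 statements merged into one kernel-verified Lean document; each statement's English description precedes it below -/
import Mathlib

section
/- Let α_s, α_t, α_u be complex numbers with α_s + α_t + α_u = -1, none of them a nonnegative integer, and such that ζ(-α_x) ≠ 0 and α_x ∉ {0, -1} for x ∈ {s,t,u}. Then B(-α_s,-α_t) + B(-α_t,-α_u) + B(-α_s,-α_u) = ∏_{x∈{s,t,u}} ζ(1+α_x)/ζ(-α_x). -/
open Complex

/-- The Euler Beta function `B(x,y) = Γ(x)Γ(y)/Γ(x+y)`. -/
noncomputable def eulerBeta (x y : ℂ) : ℂ := Complex.Gamma x * Complex.Gamma y / Complex.Gamma (x + y)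

/-!
By the reflection formula `1/Γ(1+u) = -Γ(-u) sin(πu)/π`, each of the three Beta terms equals
`-Γ(-α_s)Γ(-α_t)Γ(-α_u) sin(πα_x)/π` for the remaining variable `α_x`. The functional equation
`ζ(1+α) = 2(2π)^α Γ(-α) cos(πα/2) ζ(-α)` turns the right-hand side into
`8 (2π)^(-1) Γ(-α_s)Γ(-α_t)Γ(-α_u) ∏ cos(πα_x/2)`. The two agree by the identity
`sin 2x + sin 2y + sin 2z = -4 cos x cos y cos z` for `x + y + z = -π/2`.
-/

open Real

theorem Complex.sin_two_mul_add_sin_two_mul_add_sin_two_mul {x y z : ℂ}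
    (h : x + y + z = -(π / 2)) :
    sin (2 * x) + sin (2 * y) + sin (2 * z) = -(4 * (cos x * cos y * cos z)) := by
  obtain rfl : z = -(π / 2) - x - y := by linear_combination h
  have hz : sin (2 * (-(π / 2) - x - y)) = sin (2 * x + 2 * y) := by
    rw [show 2 * (-(π / 2) - x - y) = -(2 * x + 2 * y) - π by ring, sin_sub_pi, sin_neg, neg_neg]
  have hcz : cos (-(π / 2) - x - y) = -sin (x + y) := by
    rw [show -(π / 2) - x - y = -(x + y + π / 2) by ring, cos_neg, cos_add_pi_div_two]
  rw [hz, hcz, sin_add, sin_add, sin_two_mul, sin_two_mul, cos_two_mul, cos_two_mul]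
  ring

theorem Complex.inv_Gamma_eq_Gamma_one_sub_mul_sin {w : ℂ} (hw : ∀ n : ℕ, w ≠ n + 1) :
    (Gamma w)⁻¹ = Gamma (1 - w) * sin (π * w) / π := by
  have hπ : (π : ℂ) ≠ 0 := ofReal_ne_zero.mpr pi_ne_zero
  by_cases hsin : sin (π * w) = 0
  · obtain ⟨k, hk⟩ := sin_eq_zero_iff.mp hsin
    have hwk : w = k := mul_left_cancel₀ hπ (by rw [hk, mul_comm])
    have hΓ : Gamma w = 0 := by
      obtain ⟨m, rfl | rfl⟩ := k.eq_nat_or_neg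
      · cases m with
        | zero => simp [hwk, Gamma_zero]
        | succ n => exact absurd (by simpa using hwk) (hw n)
      · simpa [hwk] using Gamma_neg_nat_eq_zero m
    simp [hΓ, hsin]
  · have hrefl := Gamma_mul_Gamma_one_sub w
    have hΓ : Gamma w ≠ 0 := left_ne_zero_of_mul (hrefl ▸ div_ne_zero hπ hsin)
    have hΓ₁ : Gamma (1 - w) = π / sin (π * w) / Gamma w :=
      eq_div_of_mul_eq hΓ (by rw [mul_comm, hrefl])
    rw [hΓ₁]
    field_simp

theorem eulerBeta_neg_neg_of_add_eq_neg_one {s t u : ℂ} (h : s + t + u = -1)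
    (hu : ∀ n : ℕ, u ≠ n) :
    eulerBeta (-s) (-t) = -(Gamma (-s) * Gamma (-t) * Gamma (-u) * sin (π * u) / π) := by
  have hst : -s + -t = 1 + u := by linear_combination -h
  have hinv := inv_Gamma_eq_Gamma_one_sub_mul_sin (w := 1 + u)
    fun n hn => hu n (by linear_combination hn)
  rw [eulerBeta, hst, div_eq_mul_inv, hinv, show 1 - (1 + u) = -u by ring,
    show (π : ℂ) * (1 + u) = π * u + π by ring, Complex.sin_add_pi]
  ring

theorem riemannZeta_one_add_div_riemannZeta_neg {α : ℂ} (hα : ∀ n : ℕ, α ≠ n) (hα₁ : α ≠ -1)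
    (hζ : riemannZeta (-α) ≠ 0) :
    riemannZeta (1 + α) / riemannZeta (-α) = 2 * (2 * π) ^ α * Gamma (-α) * cos (π * α / 2) := by
  have hfe := riemannZeta_one_sub (s := -α) (fun n hn => hα n (by linear_combination -hn))
    (fun h => hα₁ (by linear_combination -h))
  rw [sub_neg_eq_add, neg_neg, mul_neg, neg_div, Complex.cos_neg] at hfe
  rw [hfe, mul_div_cancel_right₀ _ hζ]

theorem freund_witten_general (αs αt αu : ℂ) (hsum : αs + αt + αu = -1)
    (hs : ∀ n : ℕ, αs ≠ n) (ht : ∀ n : ℕ, αt ≠ n) (hu : ∀ n : ℕ, αu ≠ n)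
    (hζs : riemannZeta (-αs) ≠ 0) (hζt : riemannZeta (-αt) ≠ 0)
    (hζu : riemannZeta (-αu) ≠ 0)
    (hs1 : αs ≠ -1) (ht1 : αt ≠ -1) (hu1 : αu ≠ -1) :
    eulerBeta (-αs) (-αt) + eulerBeta (-αt) (-αu) + eulerBeta (-αs) (-αu) =
      (riemannZeta (1 + αs) / riemannZeta (-αs)) *
      (riemannZeta (1 + αt) / riemannZeta (-αt)) *
      (riemannZeta (1 + αu) / riemannZeta (-αu)) := by
  have h2π : (2 * π : ℂ) ≠ 0 := mul_ne_zero two_ne_zero (ofReal_ne_zero.mpr pi_ne_zero)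
  have hpow : (2 * π : ℂ) ^ αs * (2 * π) ^ αt * (2 * π) ^ αu = (2 * (π : ℂ))⁻¹ := by
    rw [← cpow_add _ _ h2π, ← cpow_add _ _ h2π, hsum, Complex.cpow_neg_one]
  have htrig := sin_two_mul_add_sin_two_mul_add_sin_two_mul
    (x := π * αs / 2) (y := π * αt / 2) (z := π * αu / 2) (by linear_combination π / 2 * hsum)
  simp only [mul_div_cancel₀ _ (two_ne_zero' ℂ)] at htrig
  rw [eulerBeta_neg_neg_of_add_eq_neg_one hsum hu,
    eulerBeta_neg_neg_of_add_eq_neg_one (by linear_combination hsum) hs,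
    eulerBeta_neg_neg_of_add_eq_neg_one (by linear_combination hsum) ht,
    riemannZeta_one_add_div_riemannZeta_neg hs hs1 hζs,
    riemannZeta_one_add_div_riemannZeta_neg ht ht1 hζt,
    riemannZeta_one_add_div_riemannZeta_neg hu hu1 hζu]
  linear_combination (-(Gamma (-αs) * Gamma (-αt) * Gamma (-αu) / π)) * htrig
    + (-8 * Gamma (-αs) * Gamma (-αt) * Gamma (-αu)
        * cos (π * αs / 2) * cos (π * αt / 2) * cos (π * αu / 2)) * hpow

/-- Freund–Witten: the crossing-symmetrized Veneziano amplitude as a product of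
ratios of Riemann zeta values. -/
theorem freund_witten (αs αt αu : ℂ) (hsum : αs + αt + αu = -1)
    (hs : ∀ n : ℕ, αs ≠ n) (ht : ∀ n : ℕ, αt ≠ n) (hu : ∀ n : ℕ, αu ≠ n)
    (hζs : riemannZeta (-αs) ≠ 0) (hζt : riemannZeta (-αt) ≠ 0)
    (hζu : riemannZeta (-αu) ≠ 0)
    (hs0 : αs ≠ 0) (hs1 : αs ≠ -1) (ht0 : αt ≠ 0) (ht1 : αt ≠ -1)
    (hu0 : αu ≠ 0) (hu1 : αu ≠ -1) :
    eulerBeta (-αs) (-αt) + eulerBeta (-αt) (-αu) + eulerBeta (-αs) (-αu) =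
      (riemannZeta (1 + αs) / riemannZeta (-αs)) *
      (riemannZeta (1 + αt) / riemannZeta (-αt)) *
      (riemannZeta (1 + αu) / riemannZeta (-αu)) :=
  freund_witten_general αs αt αu hsum hs ht hu hζs hζt hζu hs1 ht1 hu1
end

section
/- For x ∈ ℝ with x > 0 and n a nonnegative integer, ∫₀^∞ (2T/(T² + 1/4)²) · arctan(T/(x+n)) dT = π/(1/2 + x + n). -/
open Real MeasureTheory Filter Topology Set

/-!
With `a = x + n` and `b = 1 / 2`, integrating by parts against the primitive
`-1 / (T ^ 2 + b ^ 2)` of `2 T / (T ^ 2 + b ^ 2) ^ 2` (the boundary terms vanish since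
`arctan 0 = 0` and `arctan` is bounded) turns the integral into
`∫₀^∞ a / ((T ^ 2 + b ^ 2) (T ^ 2 + a ^ 2)) dT = π / (2 b (a + b))`. That rational integral has the
partial-fraction primitive `a / (a ^ 2 - b ^ 2) * (arctan (T / b) / b - arctan (T / a) / a)` when
`a ≠ b`, and `(arctan (T / a) + a T / (T ^ 2 + a ^ 2)) / (2 a ^ 2)` when `a = b`.
-/

lemma hasDerivAt_arctan_div {a : ℝ} (ha : a ≠ 0) (T : ℝ) :
    HasDerivAt (fun T => arctan (T / a)) (a / (T ^ 2 + a ^ 2)) T := by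
  refine ((hasDerivAt_id' T).div_const a).arctan.congr_deriv ?_
  field_simp
  ring

lemma hasDerivAt_sq_add_const (c T : ℝ) : HasDerivAt (fun T => T ^ 2 + c) (2 * T) T := by
  simpa using (hasDerivAt_pow 2 T).add_const c

lemma tendsto_arctan_div_atTop {a : ℝ} (ha : 0 < a) :
    Tendsto (fun T => arctan (T / a)) atTop (𝓝 (π / 2)) :=
  (tendsto_nhds_of_tendsto_nhdsWithin tendsto_arctan_atTop).comp (tendsto_id.atTop_div_const ha)

lemma tendsto_sq_add_const_atTop (c : ℝ) : Tendsto (fun T : ℝ => T ^ 2 + c) atTop atTop :=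
  tendsto_atTop_add_const_right _ _ (tendsto_pow_atTop two_ne_zero)

lemma tendsto_div_sq_add_sq_atTop (a : ℝ) :
    Tendsto (fun T : ℝ => T / (T ^ 2 + a ^ 2)) atTop (𝓝 0) := by
  refine tendsto_of_tendsto_of_tendsto_of_le_of_le' tendsto_const_nhds tendsto_inv_atTop_zero
    ?_ ?_ <;> filter_upwards [eventually_gt_atTop 0] with T hT
  · positivity
  · rw [div_le_iff₀ (by positivity), ← div_eq_inv_mul, le_div_iff₀ hT]
    nlinarith [sq_nonneg a]

theorem integral_Ioi_mul_arctan_div_of_hasDerivAt {a b L : ℝ} {G : ℝ → ℝ} (ha : 0 < a)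
    (hb : b ≠ 0) (hG : ∀ T, HasDerivAt G (a / ((T ^ 2 + b ^ 2) * (T ^ 2 + a ^ 2))) T)
    (hG0 : G 0 = 0) (hGL : Tendsto G atTop (𝓝 L)) :
    ∫ T in Ioi 0, 2 * T / (T ^ 2 + b ^ 2) ^ 2 * arctan (T / a) = L := by
  have hF (T : ℝ) : HasDerivAt (fun T => G T - arctan (T / a) / (T ^ 2 + b ^ 2))
      (2 * T / (T ^ 2 + b ^ 2) ^ 2 * arctan (T / a)) T := by
    have hpos : T ^ 2 + b ^ 2 ≠ 0 := by positivity
    refine ((hG T).sub ((hasDerivAt_arctan_div ha.ne' T).div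
      (hasDerivAt_sq_add_const (b ^ 2) T) hpos)).congr_deriv ?_
    field_simp
    ring
  have hnonneg : ∀ T ∈ Ioi (0 : ℝ), 0 ≤ 2 * T / (T ^ 2 + b ^ 2) ^ 2 * arctan (T / a) :=
    fun T (hT : 0 < T) => mul_nonneg (by positivity) (arctan_nonneg.2 (by positivity))
  have hlim := hGL.sub ((tendsto_arctan_div_atTop ha).div_atTop (tendsto_sq_add_const_atTop (b ^ 2)))
  rw [integral_Ioi_of_hasDerivAt_of_nonneg' (fun T _ => hF T) hnonneg hlim]
  simp [hG0]

theorem integral_Ioi_mul_arctan_div_of_ne {a b : ℝ} (ha : 0 < a) (hb : 0 < b) (hab : a ≠ b) :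
    ∫ T in Ioi 0, 2 * T / (T ^ 2 + b ^ 2) ^ 2 * arctan (T / a) = π / (2 * b * (a + b)) := by
  have hab' : a ^ 2 - b ^ 2 ≠ 0 := by
    rw [sq_sub_sq]
    exact mul_ne_zero (by positivity) (sub_ne_zero.2 hab)
  refine integral_Ioi_mul_arctan_div_of_hasDerivAt (G := fun T =>
    a / (a ^ 2 - b ^ 2) * (arctan (T / b) / b - arctan (T / a) / a)) ha hb.ne' (fun T => ?_)
    (by simp) ?_
  · refine ((((hasDerivAt_arctan_div hb.ne' T).div_const b).sub
      ((hasDerivAt_arctan_div ha.ne' T).div_const a)).const_mul _).congr_deriv ?_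
    field_simp
    ring
  · convert (((tendsto_arctan_div_atTop hb).div_const b).sub
      ((tendsto_arctan_div_atTop ha).div_const a)).const_mul (a / (a ^ 2 - b ^ 2)) using 2
    field_simp
    ring

theorem integral_Ioi_mul_arctan_div_self {a : ℝ} (ha : 0 < a) :
    ∫ T in Ioi 0, 2 * T / (T ^ 2 + a ^ 2) ^ 2 * arctan (T / a) = π / (2 * a * (a + a)) := by
  refine integral_Ioi_mul_arctan_div_of_hasDerivAt (G := fun T =>
    (arctan (T / a) + a * (T / (T ^ 2 + a ^ 2))) / (2 * a ^ 2)) ha ha.ne' (fun T => ?_)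
    (by simp) ?_
  · have hpos : T ^ 2 + a ^ 2 ≠ 0 := by positivity
    refine (((hasDerivAt_arctan_div ha.ne' T).add (((hasDerivAt_id' T).div
      (hasDerivAt_sq_add_const (a ^ 2) T) hpos).const_mul a)).div_const _).congr_deriv ?_
    field_simp
    ring
  · convert (((tendsto_arctan_div_atTop ha).add
      ((tendsto_div_sq_add_sq_atTop a).const_mul a)).div_const (2 * a ^ 2)) using 2
    field_simp
    ring

theorem integral_Ioi_mul_arctan_div {a b : ℝ} (ha : 0 < a) (hb : 0 < b) :
    ∫ T in Ioi 0, 2 * T / (T ^ 2 + b ^ 2) ^ 2 * arctan (T / a) = π / (2 * b * (a + b)) := by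
  rcases eq_or_ne a b with rfl | hab
  · exact integral_Ioi_mul_arctan_div_self ha
  · exact integral_Ioi_mul_arctan_div_of_ne ha hb hab

theorem integral_arctan_kernel (x : ℝ) (hx : 0 < x) (n : ℕ) :
    ∫ T in Set.Ioi (0 : ℝ),
        (2 * T / (T ^ 2 + 1 / 4) ^ 2) * Real.arctan (T / (x + n)) =
      Real.pi / (1 / 2 + x + n) := by
  have h := integral_Ioi_mul_arctan_div (a := x + n) (b := 1 / 2) (by positivity) one_half_pos
  norm_num at h
  rw [h]
  ring
end

section
/- For real x > 0 and real y, with x + iy not a nonpositive integer, the argument of the Gamma function satisfies arg Γ(x + iy) = y·ψ(x) + Σ_{n=0}^∞ ( y/(x+n) - arctan(y/(x+n)) ), where the series converges. -/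
open Complex

/-- The digamma function `ψ(x) = Γ'(x)/Γ(x)`. -/
noncomputable def digamma (x : ℝ) : ℝ := deriv Real.Gamma x / Real.Gamma x

open Filter Finset Topology

/-!
At `z = x + it` the partial products `GammaSeq z n = n^z n! / ∏_{m ≤ n} (z + m)` of Euler's
limit formula have the explicit continuous argument `t log n - ∑_{m ≤ n} arctan (t / (x + m))`,
which equals
`t (log n - ∑_{m ≤ n} 1 / (x + m)) + ∑_{m ≤ n} (t / (x + m) - arctan (t / (x + m)))`.
By Gauss's limit `ψ(x) = lim (log n - ∑_{m ≤ n} 1 / (x + m))`, itself a consequence of the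
log-convexity bounds `log (x - 1) ≤ ψ(x) ≤ log x`, it converges to the right-hand side `G(t)`;
hence `exp (i G(t)) = Γ(z) / |Γ(z)|`. So `t ↦ Im L(x + it)` and `G` are continuous lifts of the
same map through the covering `t ↦ exp (it)` that agree at `t = 0`, and lifts are unique.
-/

namespace Real

lemma abs_sub_arctan_le_sq (t : ℝ) : |t - arctan t| ≤ t ^ 2 := by
  -- the derivative `s² / (1 + s²)` of `s - arctan s` is at most `|s|`
  have hderiv (s : ℝ) : HasDerivAt (fun s => s - arctan s) (1 - 1 / (1 + s ^ 2)) s :=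
    (hasDerivAt_id s).sub (hasDerivAt_arctan s)
  have hbound : ∀ s ∈ Metric.closedBall (0 : ℝ) |t|, ‖1 - 1 / (1 + s ^ 2)‖ ≤ |t| := by
    intro s hs
    rw [mem_closedBall_zero_iff, norm_eq_abs] at hs
    have h1 : 0 < 1 + s ^ 2 := by positivity
    have h2 : 1 - 1 / (1 + s ^ 2) = s ^ 2 / (1 + s ^ 2) := by field_simp; ring
    rw [h2, norm_eq_abs, abs_of_nonneg (by positivity), div_le_iff₀ h1]
    nlinarith [mul_nonneg (abs_nonneg s) (sq_nonneg (|s| - 1)), sq_abs s, abs_nonneg s]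
  have := (convex_closedBall (0 : ℝ) |t|).norm_image_sub_le_of_norm_hasDerivWithin_le
    (fun s _ => (hderiv s).hasDerivWithinAt) hbound
    (Metric.mem_closedBall_self (abs_nonneg t)) (by simp : t ∈ Metric.closedBall 0 |t|)
  simpa [sq, abs_mul_abs_self] using this

lemma abs_div_sub_arctan_div_le {t R : ℝ} (c : ℝ) (ht : |t| ≤ R) :
    |t / c - arctan (t / c)| ≤ R ^ 2 / c ^ 2 :=
  (abs_sub_arctan_le_sq _).trans <| by
    rw [div_pow]
    exact div_le_div_of_nonneg_right (sq_le_sq' (abs_le.1 ht).1 (abs_le.1 ht).2) (sq_nonneg c)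

lemma summable_div_add_sq {x : ℝ} (hx : 0 < x) (c : ℝ) :
    Summable fun n : ℕ => c / (x + n) ^ 2 := by
  refine ((summable_one_div_nat_add_rpow x 2).2 one_lt_two).mul_left c |>.congr fun n => ?_
  rw [rpow_two, abs_of_pos (by positivity), add_comm, mul_one_div]

lemma summable_div_sub_arctan_div {x : ℝ} (hx : 0 < x) (t : ℝ) :
    Summable fun n : ℕ => t / (x + n) - arctan (t / (x + n)) :=
  (summable_div_add_sq hx (|t| ^ 2)).of_norm_bounded fun _ => abs_div_sub_arctan_div_le _ le_rfl

lemma continuousOn_tsum_div_sub_arctan_div {x : ℝ} (hx : 0 < x) (R : ℝ) :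
    ContinuousOn (fun t => ∑' n : ℕ, (t / (x + n) - arctan (t / (x + n))))
      (Metric.closedBall 0 R) :=
  continuousOn_tsum (fun _ => by fun_prop) (summable_div_add_sq hx (R ^ 2))
    fun _ _ ht => abs_div_sub_arctan_div_le _ (mem_closedBall_zero_iff.1 ht)

lemma hasDerivAt_log_Gamma {x : ℝ} (hx : 0 < x) :
    HasDerivAt (fun t => log (Gamma t)) (_root_.digamma x) x := by
  have hΓ : DifferentiableAt ℝ Gamma x :=
    differentiableAt_Gamma fun m => by linarith [(Nat.cast_nonneg m : (0 : ℝ) ≤ m)]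
  exact hΓ.hasDerivAt.log (Gamma_pos_of_pos hx).ne'

lemma digamma_add_one {x : ℝ} (hx : 0 < x) :
    _root_.digamma (x + 1) = _root_.digamma x + x⁻¹ := by
  have h₁ : HasDerivAt (fun t => log (Gamma (t + 1))) (_root_.digamma (x + 1)) x :=
    (hasDerivAt_log_Gamma (by linarith)).comp_add_const x 1
  have h₂ : HasDerivAt (fun t => log (Gamma (t + 1))) (_root_.digamma x + x⁻¹) x := by
    refine ((hasDerivAt_log_Gamma hx).add (hasDerivAt_log hx.ne')).congr_of_eventuallyEq ?_
    filter_upwards [eventually_gt_nhds hx] with t ht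
    simp only [Pi.add_apply]
    rw [Gamma_add_one ht.ne', log_mul ht.ne' (Gamma_pos_of_pos ht).ne', add_comm]
  exact h₁.unique h₂

lemma digamma_add_nat {x : ℝ} (hx : 0 < x) (n : ℕ) :
    _root_.digamma (x + n) = _root_.digamma x + ∑ m ∈ range n, (x + m)⁻¹ := by
  induction n with
  | zero => simp
  | succ n ih =>
    rw [Nat.cast_succ, ← add_assoc, digamma_add_one (by positivity), ih, sum_range_succ,
      add_assoc]

lemma slope_log_Gamma {x : ℝ} (hx : 0 < x) : slope (log ∘ Gamma) x (x + 1) = log x := by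
  rw [slope_def_field, add_sub_cancel_left, div_one, Function.comp_apply, Function.comp_apply,
    Gamma_add_one hx.ne', log_mul hx.ne' (Gamma_pos_of_pos hx).ne', add_sub_cancel_right]

lemma digamma_le_log {x : ℝ} (hx : 0 < x) : _root_.digamma x ≤ log x :=
  slope_log_Gamma hx ▸ convexOn_log_Gamma.le_slope_of_hasDerivAt hx (Set.mem_Ioi.2 (by linarith))
    (by linarith) (hasDerivAt_log_Gamma hx)

lemma log_le_digamma_add_one {x : ℝ} (hx : 0 < x) : log x ≤ _root_.digamma (x + 1) :=
  slope_log_Gamma hx ▸ convexOn_log_Gamma.slope_le_of_hasDerivAt hx (Set.mem_Ioi.2 (by linarith))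
    (by linarith) (hasDerivAt_log_Gamma (by linarith))

lemma tendsto_digamma_sub_log : Tendsto (fun x => _root_.digamma x - log x) atTop (𝓝 0) := by
  refine tendsto_of_tendsto_of_tendsto_of_le_of_le' (tendsto_log_comp_add_sub_log (-1))
    tendsto_const_nhds ?_ ?_
  · filter_upwards [eventually_gt_atTop 1] with x hx
    have := log_le_digamma_add_one (x := x + -1) (by linarith)
    rw [neg_add_cancel_right] at this
    linarith
  · filter_upwards [eventually_gt_atTop 0] with x hx
    linarith [digamma_le_log hx]

lemma tendsto_log_sub_sum_inv {x : ℝ} (hx : 0 < x) :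
    Tendsto (fun n : ℕ => log n - ∑ m ∈ range (n + 1), (x + m)⁻¹) atTop
      (𝓝 (_root_.digamma x)) := by
  have h₁ : Tendsto (fun n : ℕ => _root_.digamma (x + (n + 1 : ℕ)) - log (x + (n + 1 : ℕ)))
      atTop (𝓝 0) :=
    tendsto_digamma_sub_log.comp <| tendsto_atTop_add_const_left _ _ <|
      tendsto_natCast_atTop_atTop.comp (tendsto_add_atTop_nat 1)
  have h₂ : Tendsto (fun n : ℕ => log (n + (x + 1)) - log n) atTop (𝓝 0) :=
    (tendsto_log_comp_add_sub_log (x + 1)).comp tendsto_natCast_atTop_atTop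
  have := (h₁.add h₂).const_sub (_root_.digamma x)
  rw [add_zero, sub_zero] at this
  refine this.congr fun n => ?_
  rw [digamma_add_nat hx]
  push_cast
  ring_nf

end Real

namespace Complex

lemma arg_eq_arctan_of_re_pos {w : ℂ} (hw : 0 < w.re) : arg w = Real.arctan (w.im / w.re) := by
  obtain ⟨h₁, h₂⟩ := abs_lt.1 (abs_arg_lt_pi_div_two_iff.2 (Or.inl hw))
  rw [← tan_arg, Real.arctan_tan h₁ h₂]

lemma exp_im_mul_I (w : ℂ) : exp (w.im * I) = exp w / ‖exp w‖ := by
  rw [norm_exp, ofReal_exp, ← exp_sub]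
  congr 1
  apply Complex.ext <;> simp

noncomputable def logGammaSeq (z : ℂ) (n : ℕ) : ℂ :=
  z * Real.log n + Real.log n.factorial - ∑ m ∈ range (n + 1), log (z + m)

lemma exp_logGammaSeq {z : ℂ} (hz : ∀ m : ℕ, z ≠ -m) {n : ℕ} (hn : n ≠ 0) :
    exp (logGammaSeq z n) = GammaSeq z n := by
  have hn' : (n : ℂ) ≠ 0 := Nat.cast_ne_zero.2 hn
  rw [logGammaSeq, exp_sub, exp_add, exp_sum, GammaSeq, cpow_def_of_ne_zero hn', natCast_log,
    mul_comm z, ← ofReal_natCast, ← ofReal_exp, Real.exp_log (by positivity)]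
  congr 1
  refine prod_congr rfl fun m _ => exp_log fun h => hz m ?_
  rwa [← eq_neg_iff_add_eq_zero] at h

lemma im_logGammaSeq {x : ℝ} (hx : 0 < x) (t : ℝ) (n : ℕ) :
    (logGammaSeq (x + I * t) n).im =
      t * Real.log n - ∑ m ∈ range (n + 1), Real.arctan (t / (x + m)) := by
  have harg (m : ℕ) : (log (x + I * t + m)).im = Real.arctan (t / (x + m)) := by
    rw [log_im, arg_eq_arctan_of_re_pos (by simpa using add_pos_of_pos_of_nonneg hx m.cast_nonneg)]
    simp
  simp [logGammaSeq, im_sum, harg, -natCast_log]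

lemma tendsto_exp_im_logGammaSeq {z : ℂ} (hz : 0 < z.re) :
    Tendsto (fun n => exp ((logGammaSeq z n).im * I)) atTop (𝓝 (Gamma z / ‖Gamma z‖)) := by
  have hz' : ∀ m : ℕ, z ≠ -m := fun m h => hz.not_ge (by simp [h])
  have hΓ : (‖Gamma z‖ : ℂ) ≠ 0 := by simpa using Gamma_ne_zero_of_re_pos hz
  have hlim := GammaSeq_tendsto_Gamma z
  refine (hlim.div (continuous_ofReal.tendsto _ |>.comp (continuous_norm.tendsto _ |>.comp hlim))
    hΓ).congr' ?_
  filter_upwards [eventually_ne_atTop 0] with n hn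
  rw [exp_im_mul_I, exp_logGammaSeq hz' hn]
  rfl

lemma tendsto_im_logGammaSeq {x : ℝ} (hx : 0 < x) (t : ℝ) :
    Tendsto (fun n => (logGammaSeq (x + I * t) n).im) atTop
      (𝓝 (t * _root_.digamma x + ∑' n : ℕ, (t / (x + n) - Real.arctan (t / (x + n))))) := by
  have hsum := (Real.summable_div_sub_arctan_div hx t).hasSum.tendsto_sum_nat.comp
    (tendsto_add_atTop_nat 1)
  refine (((Real.tendsto_log_sub_sum_inv hx).const_mul t).add hsum).congr fun n => ?_
  simp only [Function.comp_apply, im_logGammaSeq hx, sum_sub_distrib, mul_sub, mul_sum,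
    div_eq_mul_inv]
  ring

lemma Gamma_div_norm_eq_exp_mul_I {x : ℝ} (hx : 0 < x) (t : ℝ) :
    Gamma (x + I * t) / ‖Gamma (x + I * t)‖ = exp ((t * _root_.digamma x +
      ∑' n : ℕ, (t / (x + n) - Real.arctan (t / (x + n))) : ℝ) * I) :=
  tendsto_nhds_unique (tendsto_exp_im_logGammaSeq (by simpa using hx))
    ((Continuous.tendsto (f := fun u : ℝ => exp (u * I)) (by fun_prop) _).comp
      (tendsto_im_logGammaSeq hx t))

end Complex

/-- For `x > 0`, the imaginary part of the principal branch of `log Γ` (the continuous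
branch on the right half-plane, real on the positive reals) at `x + iy` equals
`y·ψ(x) + Σₙ (y/(x+n) - arctan(y/(x+n)))`, and the series converges. -/
theorem arg_gamma_formula (x y : ℝ) (hx : 0 < x)
    (L : ℂ → ℂ)
    (hL_cont : ContinuousOn L {z : ℂ | 0 < z.re})
    (hL_exp : ∀ z ∈ {z : ℂ | 0 < z.re}, Complex.exp (L z) = Complex.Gamma z)
    (hL_real : ∀ t : ℝ, 0 < t → (L (t : ℂ)).im = 0) :
    Summable (fun n : ℕ => y / (x + n) - Real.arctan (y / (x + n))) ∧
    (L (x + Complex.I * y)).im =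
      y * _root_.digamma x + ∑' n : ℕ, (y / (x + n) - Real.arctan (y / (x + n))) := by
  refine ⟨Real.summable_div_sub_arctan_div hx y, ?_⟩
  set F : ℝ → ℝ := fun t => (L (x + I * t)).im
  set G : ℝ → ℝ := fun t =>
    t * _root_.digamma x + ∑' n : ℕ, (t / (x + n) - Real.arctan (t / (x + n)))
  set ball := Metric.closedBall (0 : ℝ) |y|
  have hmem (t : ℝ) : (x : ℂ) + I * t ∈ {z : ℂ | 0 < z.re} := by simp [hx]
  have hF : ContinuousOn F ball :=
    continuous_im.comp_continuousOn <| hL_cont.comp (by fun_prop) fun t _ => hmem t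
  have hG : ContinuousOn G ball :=
    (continuous_mul_const _).continuousOn.add (Real.continuousOn_tsum_div_sub_arctan_div hx _)
  have hlift : Set.EqOn (Circle.exp ∘ F) (Circle.exp ∘ G) ball := fun t _ => Circle.ext <| by
    simp only [F, G, Function.comp_apply, Circle.coe_exp, exp_im_mul_I, hL_exp _ (hmem t),
      Gamma_div_norm_eq_exp_mul_I hx t]
  have h0 : F 0 = G 0 := by simpa [F, G] using hL_real x hx
  exact Circle.isCoveringMap_exp.eqOn_of_comp_eqOn (convex_closedBall 0 |y|).isPreconnected hF hG
    hlift (Metric.mem_closedBall_self (abs_nonneg y)) h0 (by simp)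
end

section
/- The Fourier transform identity -2T/(T² + 1/4)² = i ∫_{-∞}^∞ e^{iTx} · x · e^{-|x|/2} dx holds for all real T. -/
/-!
On `(0, ∞)` the integrand is `x e^{c x}` with `c = iT - 1/2`, and reflected through `0` it is
`-x e^{c' x}` with `c' = -iT - 1/2`. For `Re c < 0` the function `(x / c - 1 / c²) e^{c x}` is an
antiderivative of `x e^{c x}` vanishing at infinity, so `∫₀^∞ x e^{c x} dx = 1 / c²`. The integral
is therefore `1 / (iT - 1/2)² - 1 / (iT + 1/2)² = 2iT / (T² + 1/4)²`.
-/
open Complex MeasureTheory Set Filter Topology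

section

variable {E : Type*} [NormedAddCommGroup E] {f : ℝ → E}

lemma integrableOn_Iic_of_integrableOn_Ioi_comp_neg
    (hf : IntegrableOn (fun x => f (-x)) (Ioi 0)) : IntegrableOn f (Iic 0) := by
  rw [← Measure.map_neg_eq_self (volume : Measure ℝ),
    measurableEmbedding_neg.integrableOn_map_iff]
  simp_rw [Function.comp_def, neg_preimage, neg_Iic, neg_zero]
  exact Iff.mpr integrableOn_Ici_iff_integrableOn_Ioi hf

lemma integral_eq_integral_Ioi_add_integral_Ioi_comp_neg [NormedSpace ℝ E]
    (hpos : IntegrableOn f (Ioi 0)) (hneg : IntegrableOn (fun x => f (-x)) (Ioi 0)) :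
    ∫ x, f x = (∫ x in Ioi 0, f x) + ∫ x in Ioi 0, f (-x) := by
  rw [← intervalIntegral.integral_Iic_add_Ioi
      (integrableOn_Iic_of_integrableOn_Ioi_comp_neg hneg) hpos,
    integral_comp_neg_Ioi, neg_zero, add_comm]

end

section

variable {c : ℂ}

lemma integrableOn_Ioi_ofReal_mul_cexp (hc : c.re < 0) :
    IntegrableOn (fun x : ℝ => (x : ℂ) * cexp (c * x)) (Ioi 0) := by
  refine (integrableOn_rpow_mul_exp_neg_mul_rpow (s := 1) (p := 1) (b := -c.re)
    (by norm_num) one_pos (by linarith)).mono' (by fun_prop) ?_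
  filter_upwards [ae_restrict_mem measurableSet_Ioi] with x (hx : 0 < x)
  simp [Complex.norm_exp, abs_of_pos hx]

lemma tendsto_ofReal_mul_cexp_atTop (hc : c.re < 0) :
    Tendsto (fun x : ℝ => (x : ℂ) * cexp (c * x)) atTop (𝓝 0) := by
  rw [tendsto_zero_iff_norm_tendsto_zero]
  refine (tendsto_rpow_mul_exp_neg_mul_atTop_nhds_zero 1 (-c.re) (by linarith)).congr' ?_
  filter_upwards [eventually_gt_atTop 0] with x hx
  simp [Complex.norm_exp, abs_of_pos hx]

lemma integral_Ioi_ofReal_mul_cexp (hc : c.re < 0) :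
    ∫ x in Ioi (0 : ℝ), (x : ℂ) * cexp (c * x) = 1 / c ^ 2 := by
  have hc0 : c ≠ 0 := by rintro rfl; simp at hc
  have hexp : Tendsto (fun x : ℝ => cexp (c * x)) atTop (𝓝 0) := by
    simpa [tendsto_exp_nhds_zero_iff] using tendsto_id.const_mul_atTop_of_neg hc
  have hderiv : ∀ x ∈ Ici (0 : ℝ), HasDerivAt (fun y : ℝ => (y / c - 1 / c ^ 2) * cexp (c * y))
      ((x : ℂ) * cexp (c * x)) x := by
    intro x _
    have hid : HasDerivAt (fun y : ℝ => (y : ℂ)) 1 x := by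
      simpa using (hasDerivAt_id x).ofReal_comp
    refine (((hid.div_const c).sub_const (1 / c ^ 2)).mul (hid.const_mul c).cexp).congr_deriv ?_
    field_simp
    ring
  have hlim : Tendsto (fun y : ℝ => (y / c - 1 / c ^ 2) * cexp (c * y)) atTop (𝓝 0) := by
    have h := ((tendsto_ofReal_mul_cexp_atTop hc).div_const c).sub (hexp.const_mul (1 / c ^ 2))
    rw [zero_div, mul_zero, sub_zero] at h
    exact h.congr fun y => by ring
  rw [integral_Ioi_of_hasDerivAt_of_tendsto' hderiv (integrableOn_Ioi_ofReal_mul_cexp hc) hlim]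
  simp

end

lemma integral_cexp_mul_ofReal_mul_exp_neg_mul_abs {a : ℝ} (ha : 0 < a) (T : ℝ) :
    ∫ x : ℝ, cexp (I * T * x) * x * Real.exp (-a * |x|) =
      4 * a * I * T / (T ^ 2 + a ^ 2) ^ 2 := by
  set f : ℝ → ℂ := fun x => cexp (I * T * x) * x * Real.exp (-a * |x|)
  have hpos : EqOn f (fun x : ℝ => x * cexp ((I * T - a) * x)) (Ioi 0) := by
    intro x (hx : 0 < x)
    simp only [f, abs_of_pos hx, ofReal_exp]
    rw [mul_right_comm, ← Complex.exp_add, mul_comm]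
    congr 2
    push_cast
    ring
  have hneg : EqOn (fun x => f (-x)) (fun x : ℝ => -(x * cexp ((-(I * T) - a) * x))) (Ioi 0) := by
    intro x (hx : 0 < x)
    simp only [f, abs_neg, abs_of_pos hx, ofReal_exp]
    rw [mul_right_comm, ← Complex.exp_add]
    push_cast
    rw [show I * T * -(x : ℂ) + -a * x = (-(I * T) - a) * x by ring]
    ring
  have hre_pos : (I * T - a).re < 0 := by simpa using ha
  have hre_neg : (-(I * T) - a).re < 0 := by simpa using ha
  rw [integral_eq_integral_Ioi_add_integral_Ioi_comp_neg
      ((integrableOn_Ioi_ofReal_mul_cexp hre_pos).congr_fun hpos.symm measurableSet_Ioi)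
      ((integrableOn_Ioi_ofReal_mul_cexp hre_neg).neg.congr_fun hneg.symm measurableSet_Ioi),
    setIntegral_congr_fun measurableSet_Ioi hpos, setIntegral_congr_fun measurableSet_Ioi hneg,
    integral_neg, integral_Ioi_ofReal_mul_cexp hre_pos, integral_Ioi_ofReal_mul_cexp hre_neg]
  have h_pos : I * T - a ≠ 0 := fun h => by simp [h] at hre_pos
  have h_neg : -(I * T) - a ≠ 0 := fun h => by simp [h] at hre_neg
  have hprod : (I * T - a) * (-(I * T) - a) = (T : ℂ) ^ 2 + a ^ 2 := by
    linear_combination (-(T : ℂ) ^ 2) * I_sq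
  rw [← hprod]
  field_simp
  ring

theorem fourier_transform_kernel (T : ℝ) :
    ((-2 * T / (T ^ 2 + 1 / 4) ^ 2 : ℝ) : ℂ) =
      Complex.I * ∫ x : ℝ, Complex.exp (Complex.I * T * x) * x * Real.exp (-|x| / 2) := by
  have h := integral_cexp_mul_ofReal_mul_exp_neg_mul_abs one_half_pos T
  simp_rw [show ∀ x : ℝ, -|x| / 2 = -(1 / 2) * |x| from fun x => by ring]
  rw [h]
  push_cast
  linear_combination (-2 * T / ((T : ℂ) ^ 2 + 1 / 4) ^ 2) * I_sq
end

section
/- For n a positive integer and G_n(x) = 2 - 2·T_n((x² - 1/4)/(x² + 1/4)) with T_n the Chebyshev polynomial of the first kind, as x → ∞ one has G_n(x) = n²/x² + O(1/x⁴); in particular x²·G_n(x) → n². -/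
open Polynomial Filter Asymptotics

/-!
Put `t = (2x² + 1/2)⁻¹`, so that `(x² - 1/4)/(x² + 1/4) = 1 - t` and `t = 1/(2x²) + O(1/x⁴)`.
Since `T_n(1) = 1` and `T_n'(1) = n²`, the second-order Taylor expansion of the polynomial `T_n`
at `1` gives `T_n(1 - t) = 1 - n² t + O(t²)`, hence `2 - 2 T_n(1 - t) = n²/x² + O(1/x⁴)`.
-/

theorem Polynomial.exists_eval_add_eq_eval_add_derivative_mul_add_sq_mul {R : Type*} [CommRing R]
    (p : R[X]) (a : R) :
    ∃ q : R[X], ∀ s, p.eval (a + s) = p.eval a + p.derivative.eval a * s + s ^ 2 * q.eval s := by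
  have hdvd : X ^ 2 ∣ taylor a p - (C (p.eval a) + C (p.derivative.eval a) * X) := by
    rw [X_pow_dvd_iff]
    intro d hd
    interval_cases d <;> simp [taylor_coeff_zero, taylor_coeff_one]
  obtain ⟨q, hq⟩ := hdvd
  refine ⟨q, fun s => ?_⟩
  have h := congrArg (eval s) hq
  simp only [eval_sub, eval_add, eval_mul, eval_C, eval_X, eval_pow, taylor_eval] at h
  rw [add_comm a s]
  linear_combination h

theorem Polynomial.isBigO_eval_add_sub_eval_add_derivative_mul {𝕜 : Type*} [NormedField 𝕜]
    (p : 𝕜[X]) (a : 𝕜) :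
    (fun s => p.eval (a + s) - (p.eval a + p.derivative.eval a * s)) =O[nhds 0] fun s => s ^ 2 := by
  obtain ⟨q, hq⟩ := p.exists_eval_add_eq_eval_add_derivative_mul_add_sq_mul a
  have hq_bdd : (fun s => q.eval s) =O[nhds 0] fun _ => (1 : 𝕜) :=
    (q.continuous.tendsto 0).isBigO_one 𝕜
  simpa [hq, mul_comm] using (isBigO_refl (fun s : 𝕜 => s ^ 2) _).mul hq_bdd

theorem Polynomial.Chebyshev.isBigO_T_eval_one_add {𝕜 : Type*} [NormedField 𝕜] (n : ℤ) :
    (fun s => (T 𝕜 n).eval (1 + s) - (1 + n ^ 2 * s)) =O[nhds 0] fun s => s ^ 2 := by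
  simpa [T_eval_one, derivative_T_eval_one] using
    (T 𝕜 n).isBigO_eval_add_sub_eval_add_derivative_mul 1

theorem div_sq_add_quarter_eq (x : ℝ) :
    (x ^ 2 - 1 / 4) / (x ^ 2 + 1 / 4) = 1 + -(2 * x ^ 2 + 1 / 2)⁻¹ := by
  have : x ^ 2 + 1 / 4 ≠ 0 := by positivity
  field_simp
  ring

theorem tendsto_inv_two_mul_sq_add_half_atTop :
    Tendsto (fun x : ℝ => (2 * x ^ 2 + 1 / 2)⁻¹) atTop (nhds 0) :=
  tendsto_inv_atTop_zero.comp <| tendsto_atTop_add_const_right _ _ <|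
    (tendsto_pow_atTop two_ne_zero).const_mul_atTop two_pos

theorem isBigO_inv_two_mul_sq_add_half_sq :
    (fun x : ℝ => ((2 * x ^ 2 + 1 / 2)⁻¹) ^ 2) =O[atTop] fun x => 1 / x ^ 4 := by
  refine IsBigO.of_bound 1 ?_
  filter_upwards [eventually_gt_atTop 0] with x hx
  have h : (2 * x ^ 2 + 1 / 2)⁻¹ ^ 2 ≤ 1 / x ^ 4 := by
    rw [inv_pow, ← one_div]
    gcongr
    nlinarith [pow_pos hx 2]
  simpa [abs_of_nonneg, hx.le] using h

theorem isBigO_two_mul_inv_two_mul_sq_add_half_sub :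
    (fun x : ℝ => 2 * (2 * x ^ 2 + 1 / 2)⁻¹ - 1 / x ^ 2) =O[atTop] fun x => 1 / x ^ 4 := by
  refine IsBigO.of_bound 1 ?_
  filter_upwards [eventually_gt_atTop 0] with x hx
  have h : 2 * (2 * x ^ 2 + 1 / 2)⁻¹ - 1 / x ^ 2 = -(1 / (4 * x ^ 4 + x ^ 2)) := by
    field_simp
    ring
  rw [h, norm_neg, one_mul, Real.norm_of_nonneg (by positivity), Real.norm_of_nonneg (by positivity)]
  gcongr
  nlinarith [pow_pos hx 4, pow_pos hx 2]

theorem tendsto_sq_mul_of_isBigO_one_div_pow_four {f : ℝ → ℝ}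
    (hf : f =O[atTop] fun x => 1 / x ^ 4) : Tendsto (fun x => x ^ 2 * f x) atTop (nhds 0) := by
  refine ((isBigO_refl (fun x : ℝ => x ^ 2) atTop).mul hf).trans_tendsto ?_
  have h : (fun x : ℝ => x ^ 2 * (1 / x ^ 4)) =ᶠ[atTop] fun x => (x ^ 2)⁻¹ := by
    filter_upwards [eventually_ne_atTop 0] with x hx
    field_simp
  exact (tendsto_inv_atTop_zero.comp (tendsto_pow_atTop two_ne_zero)).congr' h.symm

theorem G_asymptotic_general (n : ℕ) :
    ((fun x : ℝ =>
        (2 - 2 * (Polynomial.Chebyshev.T ℝ (n : ℤ)).eval ((x ^ 2 - 1 / 4) / (x ^ 2 + 1 / 4)))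
          - (n : ℝ) ^ 2 / x ^ 2) =O[atTop] fun x : ℝ => 1 / x ^ 4) ∧
    Tendsto
      (fun x : ℝ =>
        x ^ 2 * (2 - 2 * (Polynomial.Chebyshev.T ℝ (n : ℤ)).eval ((x ^ 2 - 1 / 4) / (x ^ 2 + 1 / 4))))
      atTop (nhds ((n : ℝ) ^ 2)) := by
  have hT : (fun x : ℝ => (Chebyshev.T ℝ n).eval (1 + -(2 * x ^ 2 + 1 / 2)⁻¹)
      - (1 + (n : ℤ) ^ 2 * -(2 * x ^ 2 + 1 / 2)⁻¹)) =O[atTop] fun x => 1 / x ^ 4 := by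
    refine ((Chebyshev.isBigO_T_eval_one_add (n : ℤ)).comp_tendsto ?_).trans ?_
    · simpa using tendsto_inv_two_mul_sq_add_half_atTop.neg
    · simpa [Function.comp_def] using isBigO_inv_two_mul_sq_add_half_sq
  have hG : ((fun x : ℝ =>
      (2 - 2 * (Chebyshev.T ℝ (n : ℤ)).eval ((x ^ 2 - 1 / 4) / (x ^ 2 + 1 / 4)))
        - (n : ℝ) ^ 2 / x ^ 2) =O[atTop] fun x : ℝ => 1 / x ^ 4) := by
    refine (hT.const_mul_left (-2)).add
      (isBigO_two_mul_inv_two_mul_sq_add_half_sub.const_mul_left ((n : ℝ) ^ 2)) |>.congr_left ?_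
    intro x
    rw [div_sq_add_quarter_eq]
    push_cast
    ring
  refine ⟨hG, ?_⟩
  rw [← zero_add ((n : ℝ) ^ 2)]
  refine ((tendsto_sq_mul_of_isBigO_one_div_pow_four hG).add_const _).congr' ?_
  filter_upwards [eventually_ne_atTop 0] with x hx
  field_simp
  ring

theorem G_asymptotic (n : ℕ) (hn : 0 < n) :
    ((fun x : ℝ =>
        (2 - 2 * (Polynomial.Chebyshev.T ℝ (n : ℤ)).eval ((x ^ 2 - 1 / 4) / (x ^ 2 + 1 / 4)))
          - (n : ℝ) ^ 2 / x ^ 2) =O[atTop] fun x : ℝ => 1 / x ^ 4) ∧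
    Tendsto
      (fun x : ℝ =>
        x ^ 2 * (2 - 2 * (Polynomial.Chebyshev.T ℝ (n : ℤ)).eval ((x ^ 2 - 1 / 4) / (x ^ 2 + 1 / 4))))
      atTop (nhds ((n : ℝ) ^ 2)) :=
  G_asymptotic_general n
end

section
/- For positive integer n, I₁(n) := ∫₀^∞ (-G_n'(x)) · (1 - (log π/(2π)) x) dx = -(n/2) log π + 2(1 - (-1)ⁿ), where G_n(x) = 2 - 2·T_n((x² - 1/4)/(x² + 1/4)). -/
/-!
Since `-G_n' = g n` and `G_n → 0` at infinity, `∫ g n = G_n(0) = 2 - 2 (-1)ⁿ`. For the weight `x`,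
the second difference `G_{m+1} - 2 G_m + G_{m-1} = 2 T_m(u) / (x² + 1/4)` has the primitive
`-(2/m) x U_{m-1}(u) / (x² + 1/4)`, vanishing at `0` and `∞`; integrating by parts, `n ↦ ∫ x g_n`
has zero second difference, hence equals `n ∫ x g_1 = n π`.
-/

open Polynomial Polynomial.Chebyshev MeasureTheory Filter Set Topology Real

noncomputable section

namespace ChebyshevG

def u (x : ℝ) : ℝ := (x ^ 2 - 1 / 4) / (x ^ 2 + 1 / 4)

def G (m : ℤ) (x : ℝ) : ℝ := 2 - 2 * (T ℝ m).eval (u x)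

def g (m : ℤ) (x : ℝ) : ℝ := m * (U ℝ (m - 1)).eval (u x) * (2 * x / (1 / 4 + x ^ 2) ^ 2)

lemma sq_add_quarter_pos (x : ℝ) : 0 < x ^ 2 + 1 / 4 := by positivity

lemma hasDerivAt_sq_add_quarter (x : ℝ) : HasDerivAt (fun y : ℝ => y ^ 2 + 1 / 4) (2 * x) x := by
  simpa using (hasDerivAt_pow 2 x).add_const (1 / 4)

lemma hasDerivAt_u (x : ℝ) : HasDerivAt u (x / (x ^ 2 + 1 / 4) ^ 2) x := by
  have h := ((hasDerivAt_pow 2 x).sub_const (1 / 4)).div (hasDerivAt_sq_add_quarter x)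
    (sq_add_quarter_pos x).ne'
  refine h.congr_deriv ?_
  field_simp
  ring

lemma continuous_u : Continuous u :=
  continuous_iff_continuousAt.2 fun x => (hasDerivAt_u x).continuousAt

lemma u_zero : u 0 = -1 := by norm_num [u]

lemma one_sub_u (x : ℝ) : 1 - u x = (2 * (x ^ 2 + 1 / 4))⁻¹ := by
  have := (sq_add_quarter_pos x).ne'
  unfold u
  field_simp
  ring

lemma u_mem_Icc (x : ℝ) : u x ∈ Icc (-1 : ℝ) 1 := by
  have hr := sq_add_quarter_pos x
  constructor
  · rw [u, le_div_iff₀ hr]; nlinarith [sq_nonneg x]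
  · rw [u, div_le_one hr]; linarith

lemma tendsto_inv_sq_add_quarter_atTop :
    Tendsto (fun x : ℝ => (x ^ 2 + 1 / 4)⁻¹) atTop (𝓝 0) :=
  (tendsto_atTop_add_const_right _ _ (tendsto_pow_atTop two_ne_zero)).inv_tendsto_atTop

lemma tendsto_div_sq_add_quarter_atTop :
    Tendsto (fun x : ℝ => x / (x ^ 2 + 1 / 4)) atTop (𝓝 0) := by
  refine squeeze_zero' ?_ ?_ tendsto_inv_atTop_zero
  · filter_upwards [eventually_gt_atTop 0] with x hx
    positivity
  · filter_upwards [eventually_gt_atTop 0] with x hx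
    rw [div_le_iff₀ (sq_add_quarter_pos x), inv_mul_eq_div, le_div_iff₀ hx]
    linarith

lemma tendsto_u_atTop : Tendsto u atTop (𝓝 1) := by
  have h : u = fun x => 1 - 2⁻¹ * (x ^ 2 + 1 / 4)⁻¹ := by
    funext x
    have := one_sub_u x
    rw [mul_inv] at this
    linarith
  rw [h]
  simpa using tendsto_const_nhds.sub (tendsto_inv_sq_add_quarter_atTop.const_mul 2⁻¹)

lemma tendsto_eval_u_atTop (P : ℝ[X]) :
    Tendsto (fun x => P.eval (u x)) atTop (𝓝 (P.eval 1)) :=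
  (P.continuous.tendsto 1).comp tendsto_u_atTop

lemma hasDerivAt_G (m : ℤ) (x : ℝ) : HasDerivAt (G m) (-g m x) x := by
  have h := (((T ℝ m).hasDerivAt (u x)).comp x (hasDerivAt_u x)).const_mul 2 |>.const_sub 2
  refine h.congr_deriv ?_
  rw [g, T_derivative_eq_U]
  simp only [eval_mul, eval_intCast]
  field_simp
  ring

lemma tendsto_G_atTop (m : ℤ) : Tendsto (G m) atTop (𝓝 0) := by
  have h := ((tendsto_eval_u_atTop (T ℝ m)).const_mul 2).const_sub 2
  rwa [T_eval_one, mul_one, sub_self] at h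

lemma G_add_one_sub_two_mul_add_G_sub_one (m : ℤ) (x : ℝ) :
    G (m + 1) x - 2 * G m x + G (m - 1) x = 2 * (T ℝ m).eval (u x) / (x ^ 2 + 1 / 4) := by
  have hT := congrArg (eval (u x)) (T_add_one ℝ m)
  simp only [eval_sub, eval_mul, eval_ofNat, eval_X] at hT
  calc G (m + 1) x - 2 * G m x + G (m - 1) x = 4 * (1 - u x) * (T ℝ m).eval (u x) := by
        rw [G, G, G, hT]; ring
    _ = 2 * (T ℝ m).eval (u x) / (x ^ 2 + 1 / 4) := by
        rw [one_sub_u]; field_simp; ring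

lemma hasDerivAt_div_mul_eval_U (m : ℤ) (x : ℝ) :
    HasDerivAt (fun y => y / (y ^ 2 + 1 / 4) * (U ℝ (m - 1)).eval (u y))
      (-m * (T ℝ m).eval (u x) / (x ^ 2 + 1 / 4)) x := by
  have hr := (sq_add_quarter_pos x).ne'
  have h := ((hasDerivAt_id' x).div (hasDerivAt_sq_add_quarter x) hr).mul
    (((U ℝ (m - 1)).hasDerivAt (u x)).comp x (hasDerivAt_u x))
  refine h.congr_deriv ?_
  have hU := congrArg (eval (u x)) (add_one_mul_T_eq_poly_in_U (R := ℝ) (m - 1))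
  simp only [sub_add_cancel, eval_mul, eval_sub, eval_intCast, eval_one, eval_X,
    eval_pow, Int.cast_sub, Int.cast_one] at hU
  have hu : u x * (x ^ 2 + 1 / 4) = x ^ 2 - 1 / 4 := div_mul_cancel₀ _ hr
  -- the `U'` terms cancel because `(1 - u x ^ 2) * (x ^ 2 + 1 / 4) ^ 2 = x ^ 2`
  simp only [Pi.div_apply, Function.comp_apply]
  generalize u x = a at hU hu ⊢
  field_simp
  linear_combination (x ^ 2 * 4 + 1) ^ 2 * hU + 4 * ((x ^ 2 * 4 + 1) * eval a (U ℝ (m - 1))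
    + (a * (x ^ 2 * 4 + 1) + 4 * x ^ 2 - 1) * eval a (derivative (U ℝ (m - 1)))) * hu

lemma integrableOn_eval_u_mul (P : ℝ[X]) {w : ℝ → ℝ} (hw : IntegrableOn w (Ioi 0)) :
    IntegrableOn (fun x => P.eval (u x) * w x) (Ioi 0) := by
  obtain ⟨C, hC⟩ := isCompact_Icc.exists_bound_of_continuousOn
    (P.continuous.continuousOn (s := Icc (-1 : ℝ) 1))
  exact hw.bdd_mul (P.continuous.comp continuous_u).aestronglyMeasurable
    (ae_of_all _ fun x => hC _ (u_mem_Icc x))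

lemma g_one (x : ℝ) : g 1 x = 2 * x / (1 / 4 + x ^ 2) ^ 2 := by simp [g]

lemma eval_u_mul_g_one (m : ℤ) (x : ℝ) :
    (C (m : ℝ) * U ℝ (m - 1)).eval (u x) * g 1 x = g m x := by
  rw [g_one]
  simp only [eval_mul, eval_C, g]

lemma integrableOn_g_one : IntegrableOn (g 1) (Ioi 0) :=
  integrableOn_Ioi_deriv_of_nonneg' (fun x _ => (hasDerivAt_G 1 x).neg.congr_deriv (neg_neg _))
    (fun x (hx : 0 < x) => by rw [g_one]; positivity) (tendsto_G_atTop 1).neg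

lemma integrableOn_g (m : ℤ) : IntegrableOn (g m) (Ioi 0) := by
  simpa only [eval_u_mul_g_one] using
    integrableOn_eval_u_mul (C (m : ℝ) * U ℝ (m - 1)) integrableOn_g_one

lemma integral_g (m : ℤ) : ∫ x in Ioi 0, g m x = G m 0 := by
  rw [integral_Ioi_of_hasDerivAt_of_tendsto' (f := fun x => -G m x)
    (fun x _ => (hasDerivAt_G m x).neg.congr_deriv (neg_neg _)) (integrableOn_g m)
    (by simpa using (tendsto_G_atTop m).neg)]
  ring

lemma hasDerivAt_two_mul_arctan_sub (x : ℝ) :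
    HasDerivAt (fun y => 2 * arctan (2 * y) - y / (y ^ 2 + 1 / 4)) (x * g 1 x) x := by
  have hr := (sq_add_quarter_pos x).ne'
  have h := (((hasDerivAt_id' x).const_mul 2).arctan.const_mul 2).sub
    ((hasDerivAt_id' x).div (hasDerivAt_sq_add_quarter x) hr)
  refine h.congr_deriv ?_
  have : 1 + (2 * x) ^ 2 ≠ 0 := by positivity
  rw [g_one]
  field_simp
  ring

lemma tendsto_two_mul_arctan_sub :
    Tendsto (fun y => 2 * arctan (2 * y) - y / (y ^ 2 + 1 / 4)) atTop (𝓝 π) := by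
  have h : Tendsto (fun y => arctan (2 * y)) atTop (𝓝 (π / 2)) :=
    (tendsto_nhds_of_tendsto_nhdsWithin tendsto_arctan_atTop).comp
      (tendsto_id.const_mul_atTop' two_pos)
  convert (h.const_mul 2).sub tendsto_div_sq_add_quarter_atTop using 2
  ring

lemma integrableOn_mul_g_one : IntegrableOn (fun x => x * g 1 x) (Ioi 0) :=
  integrableOn_Ioi_deriv_of_nonneg' (fun x _ => hasDerivAt_two_mul_arctan_sub x)
    (fun x (hx : 0 < x) => by rw [g_one]; positivity) tendsto_two_mul_arctan_sub

lemma integral_mul_g_one : ∫ x in Ioi 0, x * g 1 x = π := by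
  rw [integral_Ioi_of_hasDerivAt_of_tendsto' (fun x _ => hasDerivAt_two_mul_arctan_sub x)
    integrableOn_mul_g_one tendsto_two_mul_arctan_sub]
  simp

lemma integrableOn_mul_g (m : ℤ) : IntegrableOn (fun x => x * g m x) (Ioi 0) := by
  refine (integrableOn_eval_u_mul (C (m : ℝ) * U ℝ (m - 1)) integrableOn_mul_g_one).congr_fun
    (fun x _ => ?_) measurableSet_Ioi
  rw [← eval_u_mul_g_one m x]
  ring

lemma hasDerivAt_two_mul_eval_T_div (m : ℤ) (x : ℝ) :
    HasDerivAt (fun y => 2 * (T ℝ m).eval (u y) / (y ^ 2 + 1 / 4))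
      (-(g (m + 1) x - 2 * g m x + g (m - 1) x)) x := by
  have e : (fun y => 2 * (T ℝ m).eval (u y) / (y ^ 2 + 1 / 4)) =
      fun y => G (m + 1) y - 2 * G m y + G (m - 1) y :=
    funext fun y => (G_add_one_sub_two_mul_add_G_sub_one m y).symm
  rw [e]
  exact (((hasDerivAt_G (m + 1) x).sub ((hasDerivAt_G m x).const_mul 2)).add
    (hasDerivAt_G (m - 1) x)).congr_deriv (by ring)

/-- Integration by parts of `x * (ΔG)'`, where `ΔG = G (m + 1) - 2 * G m + G (m - 1)`, using the
primitive `-(2 / m) * x / (x ^ 2 + 1 / 4) * U_{m-1}(u x)` of `ΔG` from `hasDerivAt_div_mul_eval_U`. -/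
def mulSecondDiffPrimitive (m : ℤ) (y : ℝ) : ℝ :=
  -(2 / m) * (y / (y ^ 2 + 1 / 4) * (U ℝ (m - 1)).eval (u y))
    - y * (2 * (T ℝ m).eval (u y) / (y ^ 2 + 1 / 4))

lemma hasDerivAt_mulSecondDiffPrimitive (m : ℤ) (hm : (m : ℝ) ≠ 0) (x : ℝ) :
    HasDerivAt (mulSecondDiffPrimitive m) (x * g (m + 1) x - 2 * (x * g m x) + x * g (m - 1) x) x := by
  have h := ((hasDerivAt_div_mul_eval_U m x).const_mul (-(2 / (m : ℝ)))).sub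
    ((hasDerivAt_id' x).mul (hasDerivAt_two_mul_eval_T_div m x))
  refine h.congr_deriv ?_
  have := (sq_add_quarter_pos x).ne'
  field_simp
  ring

lemma tendsto_mulSecondDiffPrimitive_atTop (m : ℤ) : Tendsto (mulSecondDiffPrimitive m) atTop (𝓝 0) := by
  have h : mulSecondDiffPrimitive m = fun y => y / (y ^ 2 + 1 / 4) *
      (-(2 / m) * (U ℝ (m - 1)).eval (u y) - 2 * (T ℝ m).eval (u y)) := by
    funext y
    rw [mulSecondDiffPrimitive]
    ring
  rw [h]
  simpa using tendsto_div_sq_add_quarter_atTop.mul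
    (((tendsto_eval_u_atTop (U ℝ (m - 1))).const_mul (-(2 / (m : ℝ)))).sub
      ((tendsto_eval_u_atTop (T ℝ m)).const_mul 2))

lemma integral_mul_g_add_one (m : ℤ) (hm : (m : ℝ) ≠ 0) :
    ∫ x in Ioi 0, x * g (m + 1) x =
      2 * (∫ x in Ioi 0, x * g m x) - ∫ x in Ioi 0, x * g (m - 1) x := by
  have hint : IntegrableOn (fun x => x * g (m + 1) x - 2 * (x * g m x)) (Ioi 0) :=
    (integrableOn_mul_g (m + 1)).sub ((integrableOn_mul_g m).const_mul 2)
  have h := integral_Ioi_of_hasDerivAt_of_tendsto' (fun x _ => hasDerivAt_mulSecondDiffPrimitive m hm x)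
    (hint.add (integrableOn_mul_g (m - 1))) (tendsto_mulSecondDiffPrimitive_atTop m)
  rw [integral_add hint (integrableOn_mul_g _), integral_sub (integrableOn_mul_g _)
    ((integrableOn_mul_g m).const_mul 2), integral_const_mul] at h
  simp only [mulSecondDiffPrimitive, zero_div, zero_mul, mul_zero, sub_zero] at h
  linear_combination h

lemma integral_mul_g (n : ℕ) : ∫ x in Ioi 0, x * g n x = n * π := by
  induction n using Nat.twoStepInduction with
  | zero => simp [g]
  | one => simpa using integral_mul_g_one
  | more k ih₀ ih₁ =>
    have h := integral_mul_g_add_one (k + 1) (by positivity)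
    push_cast at h ih₁ ⊢
    rw [show (k : ℤ) + 1 + 1 = k + 2 by ring, add_sub_cancel_right] at h
    rw [h, ih₁, ih₀]
    ring

end ChebyshevG

end

open ChebyshevG in
theorem I_one_integral_general (n : ℕ) :
    ∫ x in Set.Ioi (0 : ℝ),
        (n * (Polynomial.Chebyshev.U ℝ ((n : ℤ) - 1)).eval ((x ^ 2 - 1 / 4) / (x ^ 2 + 1 / 4)) *
            (2 * x / (1 / 4 + x ^ 2) ^ 2)) *
          (1 - (Real.log Real.pi / (2 * Real.pi)) * x) =
      -((n : ℝ) / 2) * Real.log Real.pi + 2 * (1 - (-1 : ℝ) ^ n) := by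
  have hsplit : ∀ x : ℝ,
      (n * (U ℝ ((n : ℤ) - 1)).eval ((x ^ 2 - 1 / 4) / (x ^ 2 + 1 / 4)) *
          (2 * x / (1 / 4 + x ^ 2) ^ 2)) * (1 - (log π / (2 * π)) * x) =
        g n x - log π / (2 * π) * (x * g n x) := by
    intro x
    simp only [g, u, Int.cast_natCast]
    ring
  simp_rw [hsplit]
  rw [integral_sub (integrableOn_g n) ((integrableOn_mul_g n).const_mul _), integral_const_mul,
    integral_g, integral_mul_g, G, u_zero, T_eval_neg_one, Int.cast_negOnePow_natCast]
  field_simp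
  ring

theorem I_one_integral (n : ℕ) (hn : 0 < n) :
    ∫ x in Set.Ioi (0 : ℝ),
        (n * (Polynomial.Chebyshev.U ℝ ((n : ℤ) - 1)).eval ((x ^ 2 - 1 / 4) / (x ^ 2 + 1 / 4)) *
            (2 * x / (1 / 4 + x ^ 2) ^ 2)) *
          (1 - (Real.log Real.pi / (2 * Real.pi)) * x) =
      -((n : ℝ) / 2) * Real.log Real.pi + 2 * (1 - (-1 : ℝ) ^ n) :=
  I_one_integral_general n
end

section
/- Let σ, T be real with 0 ≤ σ ≤ 1 and T > 0, and n a positive integer. Then (1 - (1 - 1/(σ+iT))ⁿ) + (1 - (1 - 1/(σ-iT))ⁿ) = 2 - 2·((σ-1)² + T²)^{n/2}/(σ² + T²)^{n/2} · T_n( (σ(σ-1) + T²) / √((σ²+T²)((σ-1)²+T²)) ), where T_n is the Chebyshev polynomial of the first kind. -/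
/-!
With `z = σ + iT` and `w = 1 - 1/z = (z - 1)/z`, the second summand is the conjugate of the first,
so the sum is `2 - 2 Re (wⁿ)`. By de Moivre, `Re (wⁿ) = ‖w‖ⁿ cos (n arg w) = ‖w‖ⁿ Tₙ(Re w / ‖w‖)`,
and `‖w‖ = ‖z - 1‖ / ‖z‖`, `Re w = Re ((z - 1) z̄) / ‖z‖²` are explicit in `σ` and `T`.
-/

open Polynomial Complex
open scoped ComplexConjugate

theorem Complex.re_pow_eq_norm_pow_mul_chebyshev_T (w : ℂ) (n : ℕ) :
    (w ^ n).re = ‖w‖ ^ n * (Chebyshev.T ℝ n).eval (w.re / ‖w‖) := by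
  rcases eq_or_ne w 0 with rfl | hw
  · cases n <;> simp
  have hpolar : w ^ n = ((‖w‖ ^ n : ℝ) : ℂ) * exp (((n * arg w : ℝ) : ℂ) * I) := by
    conv_lhs => rw [← norm_mul_exp_arg_mul_I w]
    rw [mul_pow, ← exp_nat_mul]
    push_cast
    ring_nf
  rw [hpolar, re_ofReal_mul, exp_ofReal_mul_I_re, ← cos_arg hw, Chebyshev.T_real_cos]
  norm_cast

theorem Complex.re_sub_one_div_self (z : ℂ) :
    ((z - 1) / z).re = (z.re * (z.re - 1) + z.im ^ 2) / (z.re ^ 2 + z.im ^ 2) := by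
  rw [div_re, normSq_apply]
  simp only [sub_re, sub_im, one_re, one_im]
  ring

theorem Complex.norm_sub_one_div_self (z : ℂ) :
    ‖(z - 1) / z‖ = √((z.re - 1) ^ 2 + z.im ^ 2) / √(z.re ^ 2 + z.im ^ 2) := by
  simp only [norm_div, norm_def, normSq_apply, sub_re, sub_im, one_re, one_im, sub_zero]
  ring_nf

theorem Real.div_div_sqrt_div_sqrt (c a b : ℝ) (ha : 0 ≤ a) :
    c / a / (√b / √a) = c / √(a * b) := by
  rcases ha.eq_or_lt with rfl | ha
  · simp
  have : 0 < √a := Real.sqrt_pos.2 ha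
  rw [Real.sqrt_mul ha.le]
  field_simp
  rw [Real.sq_sqrt ha.le]

theorem Real.sqrt_div_sqrt_pow (a b : ℝ) (ha : 0 ≤ a) (hb : 0 ≤ b) (n : ℕ) :
    (√b / √a) ^ n = b ^ ((n : ℝ) / 2) / a ^ ((n : ℝ) / 2) := by
  rw [Real.rpow_div_two_eq_sqrt _ ha, Real.rpow_div_two_eq_sqrt _ hb, Real.rpow_natCast,
    Real.rpow_natCast, div_pow]

theorem li_summand_chebyshev_general (σ T : ℝ) (hT : 0 < T)
    (n : ℕ) :
    (1 - (1 - 1 / ((σ : ℂ) + Complex.I * T)) ^ n) +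
      (1 - (1 - 1 / ((σ : ℂ) - Complex.I * T)) ^ n) =
      ((2 - 2 * (((σ - 1) ^ 2 + T ^ 2) ^ ((n : ℝ) / 2) / (σ ^ 2 + T ^ 2) ^ ((n : ℝ) / 2)) *
          (Polynomial.Chebyshev.T ℝ (n : ℤ)).eval
            ((σ * (σ - 1) + T ^ 2) / Real.sqrt ((σ ^ 2 + T ^ 2) * ((σ - 1) ^ 2 + T ^ 2))) : ℝ) : ℂ) := by
  set z : ℂ := σ + I * T
  have hre : z.re = σ := by simp [z]
  have him : z.im = T := by simp [z]
  have hz : z ≠ 0 := fun h => hT.ne' (by rw [← him, h, zero_im])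
  have hconj : (σ : ℂ) - I * T = conj z := Complex.ext (by simp [hre]) (by simp [him])
  set w := (z - 1) / z
  have hw_conj : 1 - 1 / conj z = conj w := by
    rw [one_sub_div ((_root_.map_ne_zero _).2 hz)]
    simp only [w, map_div₀, map_sub, map_one]
  have hw_norm : ‖w‖ ^ n =
      ((σ - 1) ^ 2 + T ^ 2) ^ ((n : ℝ) / 2) / (σ ^ 2 + T ^ 2) ^ ((n : ℝ) / 2) := by
    rw [norm_sub_one_div_self, hre, him, Real.sqrt_div_sqrt_pow _ _ (by positivity) (by positivity)]
  have hw_cos : w.re / ‖w‖ =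
      (σ * (σ - 1) + T ^ 2) / √((σ ^ 2 + T ^ 2) * ((σ - 1) ^ 2 + T ^ 2)) := by
    rw [re_sub_one_div_self, norm_sub_one_div_self, hre, him,
      Real.div_div_sqrt_div_sqrt _ _ _ (by positivity)]
  calc (1 - (1 - 1 / z) ^ n) + (1 - (1 - 1 / ((σ : ℂ) - I * T)) ^ n)
      = 2 - (w ^ n + conj (w ^ n)) := by rw [hconj, hw_conj, one_sub_div hz, map_pow]; ring
    _ = ((2 - 2 * (w ^ n).re : ℝ) : ℂ) := by rw [add_conj]; push_cast; ring
    _ = _ := by rw [re_pow_eq_norm_pow_mul_chebyshev_T, hw_norm, hw_cos]; push_cast; ring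

theorem li_summand_chebyshev (σ T : ℝ) (hσ0 : 0 ≤ σ) (hσ1 : σ ≤ 1) (hT : 0 < T)
    (n : ℕ) (hn : 0 < n) :
    (1 - (1 - 1 / ((σ : ℂ) + Complex.I * T)) ^ n) +
      (1 - (1 - 1 / ((σ : ℂ) - Complex.I * T)) ^ n) =
      ((2 - 2 * (((σ - 1) ^ 2 + T ^ 2) ^ ((n : ℝ) / 2) / (σ ^ 2 + T ^ 2) ^ ((n : ℝ) / 2)) *
          (Polynomial.Chebyshev.T ℝ (n : ℤ)).eval
            ((σ * (σ - 1) + T ^ 2) / Real.sqrt ((σ ^ 2 + T ^ 2) * ((σ - 1) ^ 2 + T ^ 2))) : ℝ) : ℂ) :=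
  li_summand_chebyshev_general σ T hT n
end
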